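/- Every graph on n vertices has at most 3^(n/3) minimal vertex covers. -/

import Mathlib

/-!
Complementation turns minimal vertex covers into maximal independent sets, which we count
inside an arbitrary vertex set `A` by induction on `A`. Let `v` have minimum degree `d` in
`G[A]`. A maximal independent set of `A` contains some `u ∈ N[v]`, since otherwise `v` could be
added to it, and deleting `u` leaves a maximal independent set of `A \ N[u]`, a set of at most
`|A| - (d + 1)` vertices. So `f(|A|) ≤ (d + 1) f(|A| - (d + 1))`, and the bound `3^(n/3)`
propagates because `t ≤ 3^(t/3)`, i.e. `t³ ≤ 3^t`, for every natural number `t`.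
-/

def IsVC {V : Type*} (G : SimpleGraph V) (C : Finset V) : Prop :=
  ∀ ⦃v w : V⦄, G.Adj v w → v ∈ C ∨ w ∈ C

theorem Nat.cube_le_three_pow (t : ℕ) : t ^ 3 ≤ 3 ^ t := by
  rcases Nat.lt_or_ge t 3 with ht | ht
  · interval_cases t <;> norm_num
  induction t, ht using Nat.le_induction with
  | base => norm_num
  | succ t ht ih =>
    calc (t + 1) ^ 3 ≤ 3 * t ^ 3 := by nlinarith [sq_nonneg t]
      _ ≤ 3 * 3 ^ t := Nat.mul_le_mul_left 3 ih
      _ = 3 ^ (t + 1) := by ring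

theorem Real.natCast_le_three_rpow (t : ℕ) : (t : ℝ) ≤ 3 ^ ((t : ℝ) / 3) := by
  rw [div_eq_mul_inv, Real.rpow_mul (by norm_num), Real.rpow_natCast,
    Real.le_rpow_inv_iff_of_pos (by positivity) (by positivity) (by norm_num)]
  exact_mod_cast Nat.cube_le_three_pow t

theorem Real.natCast_mul_three_rpow_le (t : ℕ) (a : ℝ) :
    t * (3 : ℝ) ^ ((a - t) / 3) ≤ 3 ^ (a / 3) := by
  calc t * (3 : ℝ) ^ ((a - t) / 3) ≤ 3 ^ ((t : ℝ) / 3) * 3 ^ ((a - t) / 3) := by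
        gcongr; exact Real.natCast_le_three_rpow t
    _ = 3 ^ (a / 3) := by rw [← Real.rpow_add (by norm_num)]; ring_nf

open Finset

namespace SimpleGraph

variable {V : Type*} (G : SimpleGraph V)

def IsIndepSetIn (A I : Finset V) : Prop :=
  I ⊆ A ∧ G.IsIndepSet (I : Set V)

open scoped Classical in
noncomputable def maximalIndepSetsIn (A : Finset V) : Finset (Finset V) :=
  {I ∈ A.powerset | Maximal (G.IsIndepSetIn A) I}

@[simp]
lemma mem_maximalIndepSetsIn {A I : Finset V} :
    I ∈ G.maximalIndepSetsIn A ↔ Maximal (G.IsIndepSetIn A) I := by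
  simp only [maximalIndepSetsIn, mem_filter, mem_powerset, and_iff_right_iff_imp]
  exact fun h ↦ h.prop.1

lemma card_maximalIndepSetsIn_empty_le : #(G.maximalIndepSetsIn ∅) ≤ 1 :=
  card_le_one.2 fun I hI J hJ ↦ by
    rw [mem_maximalIndepSetsIn] at hI hJ
    rw [subset_empty.1 hI.prop.1, subset_empty.1 hJ.prop.1]

variable [DecidableEq V]

lemma isIndepSetIn_insert {A I : Finset V} {v : V} (hI : G.IsIndepSetIn A I) (hv : v ∈ A)
    (hvI : ∀ w ∈ I, ¬G.Adj v w) : G.IsIndepSetIn A (insert v I) := by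
  refine ⟨insert_subset hv hI.1, ?_⟩
  rw [coe_insert]
  exact hI.2.insert fun w hw _ ↦ ⟨hvI w hw, fun h ↦ hvI w hw h.symm⟩

section closedNbhdIn

variable [DecidableRel G.Adj]

def closedNbhdIn (A : Finset V) (u : V) : Finset V :=
  insert u {w ∈ A | G.Adj u w}

lemma card_closedNbhdIn (A : Finset V) (u : V) :
    #(G.closedNbhdIn A u) = #{w ∈ A | G.Adj u w} + 1 :=
  card_insert_of_notMem (by simp)

lemma closedNbhdIn_subset {A : Finset V} {u : V} (hu : u ∈ A) : G.closedNbhdIn A u ⊆ A :=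
  insert_subset hu (filter_subset _ _)

lemma not_adj_of_mem_sdiff_closedNbhdIn {A : Finset V} {u w : V}
    (hw : w ∈ A \ G.closedNbhdIn A u) : ¬G.Adj u w := fun hadj ↦
  (mem_sdiff.1 hw).2 (mem_insert_of_mem (mem_filter.2 ⟨(mem_sdiff.1 hw).1, hadj⟩))

lemma exists_mem_closedNbhdIn_of_maximal {A I : Finset V} (hI : Maximal (G.IsIndepSetIn A) I)
    {v : V} (hv : v ∈ A) : ∃ u ∈ G.closedNbhdIn A v, u ∈ I := by
  by_contra! hdisj
  have hvI : v ∉ I := hdisj v (mem_insert_self _ _)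
  have hins : G.IsIndepSetIn A (insert v I) := G.isIndepSetIn_insert hI.prop hv
    fun w hw hvw ↦ hdisj w (mem_insert_of_mem (mem_filter.2 ⟨hI.prop.1 hw, hvw⟩)) hw
  exact hvI (hI.2 hins (subset_insert v I) (mem_insert_self v I))

lemma maximal_erase_closedNbhdIn {A I : Finset V} (hI : Maximal (G.IsIndepSetIn A) I)
    {u : V} (hu : u ∈ I) : Maximal (G.IsIndepSetIn (A \ G.closedNbhdIn A u)) (I.erase u) := by
  have huA : u ∈ A := hI.prop.1 hu
  refine ⟨⟨fun x hx ↦ ?_, hI.prop.2.mono (erase_subset u I)⟩, fun J hJ hIJ ↦ ?_⟩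
  · obtain ⟨hxu, hxI⟩ := mem_erase.1 hx
    refine mem_sdiff.2 ⟨hI.prop.1 hxI, ?_⟩
    rw [closedNbhdIn, mem_insert]
    rintro (rfl | hadj)
    · exact hxu rfl
    · exact hI.prop.2 hu hxI hxu.symm (mem_filter.1 hadj).2
  · have huJ : u ∉ J := fun h ↦ (mem_sdiff.1 (hJ.1 h)).2 (mem_insert_self u _)
    have hins : G.IsIndepSetIn A (insert u J) := G.isIndepSetIn_insert
      ⟨hJ.1.trans sdiff_subset, hJ.2⟩ huA fun w hw ↦ G.not_adj_of_mem_sdiff_closedNbhdIn (hJ.1 hw)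
    have hIuJ : I ⊆ insert u J := by
      rw [← insert_erase hu]; exact insert_subset_insert u hIJ
    intro x hx
    exact mem_erase.2 ⟨fun h ↦ huJ (h ▸ hx), hI.2 hins hIuJ (mem_insert_of_mem hx)⟩

lemma card_filter_mem_maximalIndepSetsIn_le (A : Finset V) (u : V) :
    #{I ∈ G.maximalIndepSetsIn A | u ∈ I} ≤ #(G.maximalIndepSetsIn (A \ G.closedNbhdIn A u)) := by
  refine card_le_card_of_injOn (fun I ↦ I.erase u) (fun I hI ↦ ?_)
    ((erase_injOn' u).mono fun I hI ↦ (mem_filter.1 hI).2)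
  obtain ⟨hI, hu⟩ := mem_filter.1 hI
  exact G.mem_maximalIndepSetsIn.2 (G.maximal_erase_closedNbhdIn (G.mem_maximalIndepSetsIn.1 hI) hu)

lemma card_maximalIndepSetsIn_le_sum {A : Finset V} {v : V} (hv : v ∈ A) :
    #(G.maximalIndepSetsIn A) ≤
      ∑ u ∈ G.closedNbhdIn A v, #(G.maximalIndepSetsIn (A \ G.closedNbhdIn A u)) := by
  calc #(G.maximalIndepSetsIn A)
      ≤ #((G.closedNbhdIn A v).biUnion fun u ↦ {I ∈ G.maximalIndepSetsIn A | u ∈ I}) := by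
        refine card_le_card fun I hI ↦ ?_
        obtain ⟨u, hu, huI⟩ :=
          G.exists_mem_closedNbhdIn_of_maximal (G.mem_maximalIndepSetsIn.1 hI) hv
        exact mem_biUnion.2 ⟨u, hu, mem_filter.2 ⟨hI, huI⟩⟩
    _ ≤ ∑ u ∈ G.closedNbhdIn A v, #{I ∈ G.maximalIndepSetsIn A | u ∈ I} := card_biUnion_le
    _ ≤ _ := sum_le_sum fun u _ ↦ G.card_filter_mem_maximalIndepSetsIn_le A u

theorem card_maximalIndepSetsIn_le (A : Finset V) :
    (#(G.maximalIndepSetsIn A) : ℝ) ≤ 3 ^ ((#A : ℝ) / 3) := by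
  induction A using Finset.strongInduction with
  | H A ih =>
  obtain rfl | hA := A.eq_empty_or_nonempty
  · simpa using G.card_maximalIndepSetsIn_empty_le
  obtain ⟨v, hvA, hv⟩ := A.exists_min_image (fun u ↦ #{w ∈ A | G.Adj u w}) hA
  have hrec : ∀ u ∈ G.closedNbhdIn A v, (#(G.maximalIndepSetsIn (A \ G.closedNbhdIn A u)) : ℝ) ≤
      3 ^ ((#A - #(G.closedNbhdIn A v) : ℝ) / 3) := by
    intro u hu
    have huA : u ∈ A := G.closedNbhdIn_subset hvA hu
    have hsub : G.closedNbhdIn A u ⊆ A := G.closedNbhdIn_subset huA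
    refine (ih _ (sdiff_ssubset hsub ⟨u, mem_insert_self _ _⟩)).trans
      (Real.rpow_le_rpow_of_exponent_le (by norm_num) ?_)
    rw [card_sdiff_of_subset hsub, Nat.cast_sub (card_le_card hsub), card_closedNbhdIn,
      card_closedNbhdIn]
    have hdeg : #{w ∈ A | G.Adj v w} ≤ #{w ∈ A | G.Adj u w} := hv u huA
    gcongr
  calc (#(G.maximalIndepSetsIn A) : ℝ)
      ≤ ∑ u ∈ G.closedNbhdIn A v, (#(G.maximalIndepSetsIn (A \ G.closedNbhdIn A u)) : ℝ) := by
        exact_mod_cast G.card_maximalIndepSetsIn_le_sum hvA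
    _ ≤ #(G.closedNbhdIn A v) * 3 ^ ((#A - #(G.closedNbhdIn A v) : ℝ) / 3) := by
        simpa using sum_le_sum hrec
    _ ≤ 3 ^ ((#A : ℝ) / 3) := Real.natCast_mul_three_rpow_le _ _

end closedNbhdIn

variable [Fintype V]

lemma isVC_iff_isIndepSetIn_compl {C : Finset V} :
    IsVC G C ↔ G.IsIndepSetIn univ Cᶜ := by
  simp only [IsVC, IsIndepSetIn, subset_univ, true_and, IsIndepSet, Set.Pairwise, coe_compl,
    Set.mem_compl_iff, mem_coe]
  exact ⟨fun h v hv w hw _ hadj ↦ (h hadj).elim hv hw,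
    fun h v w hadj ↦ by by_contra! hvw; exact h hvw.1 hvw.2 hadj.ne hadj⟩

lemma minimal_isVC_iff {C : Finset V} :
    (IsVC G C ∧ ∀ C' ⊂ C, ¬IsVC G C') ↔ Maximal (G.IsIndepSetIn univ) Cᶜ := by
  rw [maximal_iff_forall_gt, ← isVC_iff_isIndepSetIn_compl]
  refine and_congr_right' ⟨fun h J hJ hJind ↦ ?_, fun h C' hC' hC'vc ↦ ?_⟩
  · refine h Jᶜ (by simpa using compl_ssubset_compl.2 hJ) ?_
    rwa [isVC_iff_isIndepSetIn_compl, compl_compl]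
  · exact h (compl_ssubset_compl.2 hC') ((G.isVC_iff_isIndepSetIn_compl).1 hC'vc)

end SimpleGraph

open SimpleGraph in
/-- Moon–Moser bound: every graph on `n` vertices has at most `3^(n/3)` minimal
vertex covers. -/
theorem stmt19 {V : Type*} [Fintype V] (G : SimpleGraph V) :
    ({C : Finset V | IsVC G C ∧ ∀ C' ⊂ C, ¬ IsVC G C'}.ncard : ℝ) ≤
      (3 : ℝ) ^ ((Fintype.card V : ℝ) / 3) := by
  classical
  have hcovers : {C : Finset V | IsVC G C ∧ ∀ C' ⊂ C, ¬ IsVC G C'} =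
      ((G.maximalIndepSetsIn univ).image compl : Set (Finset V)) := by
    ext C
    simp only [Set.mem_ofPred_eq, G.minimal_isVC_iff, coe_image, Set.mem_image, mem_coe,
      mem_maximalIndepSetsIn]
    exact ⟨fun h ↦ ⟨Cᶜ, h, compl_compl C⟩, by rintro ⟨I, hI, rfl⟩; rwa [compl_compl]⟩
  rw [hcovers, Set.ncard_coe_finset, card_image_of_injective _ compl_injective, ← card_univ]
  exact G.card_maximalIndepSetsIn_le univ
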